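/- arXiv:1212.4218 — 3 statements merged into one kernel-verified Lean document; each statement's English description precedes it below -/
import Mathlib

section
/- Let n ≥ 3 be an integer, m > 0, s₀ = (2m)^{1/(n−2)}, and let λ : I → ℝ be a differentiable function on an open interval I ⊆ ℝ with λ(r) > s₀ and λ'(r) = √(1 − 2m·λ(r)^{2−n}) for all r ∈ I. Then λ' is differentiable on I and (n−1)·((n−2)·(1 − λ'(r)²)/λ(r)² − 2·λ''(r)/λ(r)) = 0 for all r ∈ I. -/
/-!
Differentiating `λ' = √(1 - 2m λ^(2-n))` along the curve gives
`λ'' = m (n-2) λ^(1-n)`; the factor `λ'` produced by the chain rule cancels against the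
`2√(⋯) = 2λ'` in the denominator, which is where `λ > s₀` (i.e. `2m λ^(2-n) < 1`) is needed.
Substituting `1 - λ'² = 2m λ^(2-n)` then makes the two terms of the curvature cancel.
-/

open Filter Real

lemma mul_rpow_neg_lt_one {c p x : ℝ} (hc : 0 < c) (hp : 0 < p) (hx : c ^ (1 / p) < x) :
    c * x ^ (-p) < 1 := by
  have hroot : (c ^ (1 / p)) ^ (-p) = c⁻¹ := by
    rw [← rpow_mul hc.le, one_div, inv_mul_eq_div, neg_div, div_self hp.ne', rpow_neg_one]
  calc c * x ^ (-p) < c * (c ^ (1 / p)) ^ (-p) :=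
        mul_lt_mul_of_pos_left (rpow_lt_rpow_of_neg (rpow_pos_of_pos hc _) hx (neg_neg_of_pos hp)) hc
    _ = 1 := by rw [hroot, mul_inv_cancel₀ hc.ne']

lemma hasDerivAt_deriv_of_deriv_eq_sqrt {f : ℝ → ℝ} {a q r : ℝ} (hf : DifferentiableAt ℝ f r)
    (hf' : ∀ᶠ x in nhds r, deriv f x = √(1 - a * f x ^ q)) (hpos : 0 < f r)
    (hlt : a * f r ^ q < 1) :
    HasDerivAt (deriv f) (-(a * q / 2) * f r ^ (q - 1)) r := by
  have hrad : 0 < 1 - a * f r ^ q := by linarith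
  have hf'r : deriv f r = √(1 - a * f r ^ q) := hf'.self_of_nhds
  have hf'_ne : deriv f r ≠ 0 := hf'r ▸ (sqrt_pos.2 hrad).ne'
  have hrad' : HasDerivAt (fun x => 1 - a * f x ^ q)
      (-(a * (deriv f r * q * f r ^ (q - 1)))) r := by
    simpa using ((hf.hasDerivAt.rpow_const (Or.inl hpos.ne')).const_mul a).const_sub 1
  refine (((hasDerivAt_sqrt hrad.ne').comp r hrad').congr_of_eventuallyEq hf').congr_deriv ?_
  rw [← hf'r]
  field_simp

lemma neg_mul_one_sub_sq_div_sq_sub_two_mul_div_eq_zero {a q L D : ℝ} (hL : 0 < L)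
    (hD : D ^ 2 = 1 - a * L ^ q) :
    -q * (1 - D ^ 2) / L ^ 2 - 2 * (-(a * q / 2) * L ^ (q - 1)) / L = 0 := by
  have hsplit : L ^ q = L ^ (q - 1) * L := by
    rw [← rpow_add_one hL.ne', sub_add_cancel]
  rw [hD, hsplit]
  field_simp
  ring

theorem stmt_4_general (n : ℕ) (hn : 3 ≤ n) (m : ℝ) (hm : 0 < m)
    (s₀ : ℝ) (hs₀ : s₀ = (2 * m) ^ ((1 : ℝ) / ((n : ℝ) - 2)))
    (I : Set ℝ) (hIopen : IsOpen I)
    (lam : ℝ → ℝ)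
    (hlam : ∀ r ∈ I, s₀ < lam r)
    (hdiff : ∀ r ∈ I, DifferentiableAt ℝ lam r)
    (hderiv : ∀ r ∈ I, deriv lam r = Real.sqrt (1 - 2 * m * lam r ^ (2 - (n : ℝ)))) :
    (∀ r ∈ I, DifferentiableAt ℝ (deriv lam) r) ∧
    (∀ r ∈ I,
      ((n : ℝ) - 1) * (((n : ℝ) - 2) * (1 - (deriv lam r) ^ 2) / (lam r) ^ 2 -
        2 * deriv (deriv lam) r / lam r) = 0) := by
  subst hs₀
  have h2m : 0 < 2 * m := by linarith
  have hn2 : (0 : ℝ) < n - 2 := by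
    have : (3 : ℝ) ≤ n := by exact_mod_cast hn
    linarith
  have hpos : ∀ r ∈ I, 0 < lam r := fun r hr => (rpow_pos_of_pos h2m _).trans (hlam r hr)
  have hlt : ∀ r ∈ I, 2 * m * lam r ^ (2 - (n : ℝ)) < 1 := fun r hr => by
    simpa using mul_rpow_neg_lt_one h2m hn2 (hlam r hr)
  have hD2 : ∀ r ∈ I, HasDerivAt (deriv lam)
      (-(2 * m * (2 - n) / 2) * lam r ^ (2 - (n : ℝ) - 1)) r := fun r hr =>
    hasDerivAt_deriv_of_deriv_eq_sqrt (hdiff r hr) (eventually_of_mem (hIopen.mem_nhds hr) hderiv)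
      (hpos r hr) (hlt r hr)
  refine ⟨fun r hr => (hD2 r hr).differentiableAt, fun r hr => ?_⟩
  have hD : deriv lam r ^ 2 = 1 - 2 * m * lam r ^ (2 - (n : ℝ)) := by
    rw [hderiv r hr, sq_sqrt (sub_pos.2 (hlt r hr)).le]
  have := neg_mul_one_sub_sq_div_sq_sub_two_mul_div_eq_zero (hpos r hr) hD
  rw [neg_sub] at this
  rw [(hD2 r hr).deriv, this, mul_zero]

/-- For a Schwarzschild warping function `λ` (with `λ > s₀ = (2m)^(1/(n−2))` and
`λ' = √(1 − 2m·λ^(2−n))` on an open interval `I`), `λ'` is differentiable on `I` and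
the scalar curvature identity `(n−1)·((n−2)·(1 − λ'²)/λ² − 2·λ''/λ) = 0` holds on `I`. -/
theorem stmt_4 (n : ℕ) (hn : 3 ≤ n) (m : ℝ) (hm : 0 < m)
    (s₀ : ℝ) (hs₀ : s₀ = (2 * m) ^ ((1 : ℝ) / ((n : ℝ) - 2)))
    (I : Set ℝ) (hIopen : IsOpen I) (hIconn : I.OrdConnected)
    (lam : ℝ → ℝ)
    (hlam : ∀ r ∈ I, s₀ < lam r)
    (hdiff : ∀ r ∈ I, DifferentiableAt ℝ lam r)
    (hderiv : ∀ r ∈ I, deriv lam r = Real.sqrt (1 - 2 * m * lam r ^ (2 - (n : ℝ)))) :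
    (∀ r ∈ I, DifferentiableAt ℝ (deriv lam) r) ∧
    (∀ r ∈ I,
      ((n : ℝ) - 1) * (((n : ℝ) - 2) * (1 - (deriv lam r) ^ 2) / (lam r) ^ 2 -
        2 * deriv (deriv lam) r / lam r) = 0) :=
  stmt_4_general n hn m hm s₀ hs₀ I hIopen lam hlam hdiff hderiv
end

section
/- Let n ≥ 3 be an integer, m > 0, s₀ = (2m)^{1/(n−2)}, and let λ : I → ℝ be a differentiable function on an open interval I ⊆ ℝ with λ(r) > s₀ and λ'(r) = √(1 − 2m·λ(r)^{2−n}) for all r ∈ I. Then λ' is differentiable on I and (n−2)·(1 − λ'(r)²)/λ(r)² − λ''(r)/λ(r) = m(n−2)·λ(r)^{−n} for all r ∈ I. -/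
/-! Along a solution of `λ' = g(λ)` one has `λ'' = g'(λ) λ' = g'(λ) g(λ)`, and for
`g(s) = √(1 - 2m s^(2-n))` the square root cancels in the product: `g' g = m(n-2) s^(1-n)`.
The hypothesis `λ > (2m)^(1/(n-2))` is exactly what makes the radicand
positive, so that `g` is differentiable along `λ`. -/

open Filter Topology

namespace Real

lemma pos_of_rpow_lt {c p s : ℝ} (hc : 0 < c) (hs : c ^ p < s) : 0 < s :=
  (rpow_pos_of_pos hc _).trans hs

lemma mul_rpow_sub_lt_one_of_rpow_inv_lt {c a b s : ℝ} (hc : 0 < c) (hab : a < b)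
    (hs : c ^ (b - a)⁻¹ < s) : c * s ^ (a - b) < 1 := by
  have hs₀ : 0 < s := pos_of_rpow_lt hc hs
  have hcs : c < s ^ (b - a) :=
    (rpow_inv_lt_iff_of_pos hc.le hs₀.le (sub_pos.mpr hab)).mp hs
  rw [← neg_sub, rpow_neg hs₀.le, ← div_eq_mul_inv]
  exact (div_lt_one (rpow_pos_of_pos hs₀ _)).mpr hcs

lemma hasDerivAt_sqrt_one_sub_mul_rpow {c q s : ℝ} (hs : 0 < s) (h : 0 < 1 - c * s ^ q) :
    HasDerivAt (fun x => √(1 - c * x ^ q))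
      (-(c * q * s ^ (q - 1)) / (2 * √(1 - c * s ^ q))) s := by
  have hpow : HasDerivAt (fun x => x ^ q) (q * s ^ (q - 1)) s :=
    hasDerivAt_rpow_const (Or.inl hs.ne')
  simpa [mul_assoc] using ((hpow.const_mul c).const_sub 1).sqrt h.ne'

end Real

lemma hasDerivAt_deriv_of_deriv_eventuallyEq_comp {f g : ℝ → ℝ} {g' r : ℝ}
    (hf : DifferentiableAt ℝ f r) (hg : HasDerivAt g g' (f r))
    (hfg : deriv f =ᶠ[𝓝 r] g ∘ f) : HasDerivAt (deriv f) (g' * deriv f r) r :=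
  (hg.comp r hf.hasDerivAt).congr_of_eventuallyEq hfg

theorem stmt_6_general (n : ℕ) (hn : 3 ≤ n) (m : ℝ) (hm : 0 < m)
    (s₀ : ℝ) (hs₀ : s₀ = (2 * m) ^ ((1 : ℝ) / ((n : ℝ) - 2)))
    (I : Set ℝ) (hIopen : IsOpen I)
    (lam : ℝ → ℝ)
    (hlam : ∀ r ∈ I, s₀ < lam r)
    (hdiff : ∀ r ∈ I, DifferentiableAt ℝ lam r)
    (hderiv : ∀ r ∈ I, deriv lam r = Real.sqrt (1 - 2 * m * lam r ^ (2 - (n : ℝ)))) :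
    (∀ r ∈ I, DifferentiableAt ℝ (deriv lam) r) ∧
    (∀ r ∈ I,
      ((n : ℝ) - 2) * (1 - (deriv lam r) ^ 2) / (lam r) ^ 2 -
        deriv (deriv lam) r / lam r = m * ((n : ℝ) - 2) * lam r ^ (-(n : ℝ))) := by
  have hp : (2 : ℝ) < n := by exact_mod_cast hn
  have hs₀' : s₀ = (2 * m) ^ ((n : ℝ) - 2)⁻¹ := by rw [hs₀, one_div]
  have hlam_pos : ∀ r ∈ I, 0 < lam r := fun r hr =>
    Real.pos_of_rpow_lt (by positivity) (hs₀' ▸ hlam r hr)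
  have hradicand : ∀ r ∈ I, 0 < 1 - 2 * m * lam r ^ (2 - (n : ℝ)) := fun r hr =>
    sub_pos.mpr (Real.mul_rpow_sub_lt_one_of_rpow_inv_lt (by positivity) hp (hs₀' ▸ hlam r hr))
  have hsecond : ∀ r ∈ I,
      HasDerivAt (deriv lam) (m * ((n : ℝ) - 2) * lam r ^ (1 - (n : ℝ))) r := by
    intro r hr
    have hchain := hasDerivAt_deriv_of_deriv_eventuallyEq_comp (hdiff r hr)
      (Real.hasDerivAt_sqrt_one_sub_mul_rpow (hlam_pos r hr) (hradicand r hr))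
      (eventually_of_mem (hIopen.mem_nhds hr) hderiv)
    convert hchain using 1
    rw [hderiv r hr, show (2 : ℝ) - n - 1 = 1 - n by ring]
    generalize hg : √(1 - 2 * m * lam r ^ (2 - (n : ℝ))) = g
    have : g ≠ 0 := hg ▸ (Real.sqrt_pos.mpr (hradicand r hr)).ne'
    field_simp
    ring
  refine ⟨fun r hr => (hsecond r hr).differentiableAt, fun r hr => ?_⟩
  have hx := hlam_pos r hr
  rw [(hsecond r hr).deriv, hderiv r hr, Real.sq_sqrt (hradicand r hr).le,
    show (2 : ℝ) - n = -n + (2 : ℕ) by push_cast; ring, Real.rpow_add_natCast hx.ne',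
    show (1 : ℝ) - n = -n + 1 by ring, Real.rpow_add_one hx.ne']
  field_simp
  ring

/-- For a Schwarzschild warping function `λ` (with `λ > s₀ = (2m)^(1/(n−2))` and
`λ' = √(1 − 2m·λ^(2−n))` on an open interval `I`), `λ'` is differentiable on `I` and
the Ricci curvature identity `(n−2)·(1 − λ'²)/λ² − λ''/λ = m(n−2)·λ^(−n)` holds on `I`. -/
theorem stmt_6 (n : ℕ) (hn : 3 ≤ n) (m : ℝ) (hm : 0 < m)
    (s₀ : ℝ) (hs₀ : s₀ = (2 * m) ^ ((1 : ℝ) / ((n : ℝ) - 2)))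
    (I : Set ℝ) (hIopen : IsOpen I) (hIconn : I.OrdConnected)
    (lam : ℝ → ℝ)
    (hlam : ∀ r ∈ I, s₀ < lam r)
    (hdiff : ∀ r ∈ I, DifferentiableAt ℝ lam r)
    (hderiv : ∀ r ∈ I, deriv lam r = Real.sqrt (1 - 2 * m * lam r ^ (2 - (n : ℝ)))) :
    (∀ r ∈ I, DifferentiableAt ℝ (deriv lam) r) ∧
    (∀ r ∈ I,
      ((n : ℝ) - 2) * (1 - (deriv lam r) ^ 2) / (lam r) ^ 2 -
        deriv (deriv lam) r / lam r = m * ((n : ℝ) - 2) * lam r ^ (-(n : ℝ))) :=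
  stmt_6_general n hn m hm s₀ hs₀ I hIopen lam hlam hdiff hderiv
end

section
/- Let n ≥ 3 be an integer and m > 0. On the open set of real numbers r > 0 with (m/2)·r^{2−n} < 1, the function s(r) = r·(1 + (m/2)·r^{2−n})^{2/(n−2)} is differentiable and satisfies s'(r)² = (1 + (m/2)·r^{2−n})^{4/(n−2)} · (1 − 2m·s(r)^{2−n}). -/
/-!
With `u = 1 + (m/2)·r^(2−n)` and `α = 2/(n−2)` one has `α·(2−n) = −2`, so `s^(2−n) = r^(2−n)/u²`
and `s' = u^(α−1)·(1 − (m/2)·r^(2−n))`. The identity then reduces to the perfect square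
`u² − 2m·r^(2−n) = (1 − (m/2)·r^(2−n))²`.
-/

open Real

section
variable {c p α r : ℝ}

theorem hasDerivAt_mul_one_add_mul_rpow_rpow (hr : 0 < r) (hu : 1 + c * r ^ p ≠ 0) :
    HasDerivAt (fun x : ℝ => x * (1 + c * x ^ p) ^ α)
      ((1 + c * r ^ p) ^ (α - 1) * (1 + (1 + α * p) * c * r ^ p)) r := by
  have hbase : HasDerivAt (fun x : ℝ => 1 + c * x ^ p) (c * (p * r ^ (p - 1))) r :=
    ((hasDerivAt_rpow_const (Or.inl hr.ne')).const_mul c).const_add 1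
  have hpow := (hasDerivAt_rpow_const (p := α) (Or.inl hu)).comp r hbase
  refine ((hasDerivAt_id r).mul hpow).congr_deriv ?_
  simp only [id, one_mul, Function.comp_apply]
  rw [rpow_sub_one hr.ne', rpow_sub_one hu]
  field_simp
  ring

theorem mul_rpow_rpow_of_mul_eq_neg_two (hr : 0 < r) (hu : 0 < 1 + c * r ^ p)
    (hαp : α * p = -2) :
    (r * (1 + c * r ^ p) ^ α) ^ p = r ^ p / (1 + c * r ^ p) ^ 2 := by
  rw [mul_rpow hr.le (rpow_nonneg hu.le _), ← rpow_mul hu.le, hαp, rpow_neg hu.le,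
    div_eq_mul_inv]
  norm_cast

theorem deriv_mul_one_add_mul_rpow_rpow_sq (hr : 0 < r) (hu : 0 < 1 + c * r ^ p)
    (hαp : α * p = -2) :
    deriv (fun x : ℝ => x * (1 + c * x ^ p) ^ α) r ^ 2 =
      (1 + c * r ^ p) ^ (2 * α) * (1 - 4 * c * (r * (1 + c * r ^ p) ^ α) ^ p) := by
  rw [(hasDerivAt_mul_one_add_mul_rpow_rpow hr hu.ne').deriv, hαp,
    mul_rpow_rpow_of_mul_eq_neg_two hr hu hαp]
  have hsplit : (1 + c * r ^ p) ^ (2 * α) =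
      ((1 + c * r ^ p) ^ (α - 1)) ^ 2 * (1 + c * r ^ p) ^ 2 := by
    rw [← rpow_natCast, ← rpow_mul hu.le, ← rpow_natCast (1 + c * r ^ p), ← rpow_add hu]
    congr 1
    push_cast
    ring
  rw [hsplit]
  field_simp
  ring

end

/-- On `{r > 0 : (m/2)·r^(2−n) < 1}` the function `s(r) = r·(1 + (m/2)·r^(2−n))^(2/(n−2))`
is differentiable and satisfies
`s'(r)² = (1 + (m/2)·r^(2−n))^(4/(n−2)) · (1 − 2m·s(r)^(2−n))`. -/
theorem stmt_8 (n : ℕ) (hn : 3 ≤ n) (m : ℝ) (hm : 0 < m) :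
    ∀ r : ℝ, 0 < r → (m / 2) * r ^ (2 - (n : ℝ)) < 1 →
      DifferentiableAt ℝ
        (fun x : ℝ => x * (1 + (m / 2) * x ^ (2 - (n : ℝ))) ^ ((2 : ℝ) / ((n : ℝ) - 2))) r ∧
      (deriv
          (fun x : ℝ => x * (1 + (m / 2) * x ^ (2 - (n : ℝ))) ^ ((2 : ℝ) / ((n : ℝ) - 2))) r) ^ 2
        = (1 + (m / 2) * r ^ (2 - (n : ℝ))) ^ ((4 : ℝ) / ((n : ℝ) - 2)) *
            (1 - 2 * m *
              (r * (1 + (m / 2) * r ^ (2 - (n : ℝ))) ^ ((2 : ℝ) / ((n : ℝ) - 2)))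
                ^ (2 - (n : ℝ))) := by
  intro r hr _
  have hn2 : (n : ℝ) - 2 ≠ 0 := by
    have : (3 : ℝ) ≤ n := by exact_mod_cast hn
    linarith
  have hu : 0 < 1 + (m / 2) * r ^ (2 - (n : ℝ)) := by positivity
  have hαp : 2 / ((n : ℝ) - 2) * (2 - n) = -2 := by
    field_simp
    ring
  refine ⟨(hasDerivAt_mul_one_add_mul_rpow_rpow hr hu.ne').differentiableAt, ?_⟩
  rw [deriv_mul_one_add_mul_rpow_rpow_sq hr hu hαp]
  congr 2 <;> ring
end
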